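/- For a discrete-time discounted MDP with discount γ ∈ [0,1) and bounded rewards, for any two policies π and π', the difference of expected discounted returns satisfies J(π') − J(π) = (1/(1−γ)) · E_{s ∼ d_{π'}} E_{a ∼ π'(·|s)} [A_π(s, a)], where d_{π'} is the normalized discounted state-visitation distribution of π' and A_π is the advantage function of π. -/

import Mathlib

open scoped BigOperators

section MDP

variable {S A : Type*} [Fintype S] [Fintype A]

/-- `P` is a transition kernel: each `P s a` is a probability distribution on states. -/
def IsKernel (P : S → A → S → ℝ) : Prop :=
  (∀ s a s', 0 ≤ P s a s') ∧ ∀ s a, ∑ s', P s a s' = 1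

/-- `π` is a policy: each `π s` is a probability distribution on actions. -/
def IsPolicy (π : S → A → ℝ) : Prop :=
  (∀ s a, 0 ≤ π s a) ∧ ∀ s, ∑ a, π s a = 1

/-- `ρ` is a probability distribution on states. -/
def IsDist (ρ : S → ℝ) : Prop := (∀ s, 0 ≤ ρ s) ∧ ∑ s, ρ s = 1

/-- Total variation distance between finitely supported distributions. -/
noncomputable def dtv {X : Type*} [Fintype X] (p q : X → ℝ) : ℝ := (1 / 2) * ∑ x, |p x - q x|

/-- One-step state transition probability induced by policy `π`. -/
def stepKernel (P : S → A → S → ℝ) (π : S → A → ℝ) (s s' : S) : ℝ :=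
  ∑ a, π s a * P s a s'

/-- Distribution of the state after `t` steps starting from `s`, following `π`. -/
noncomputable def visit [DecidableEq S] (P : S → A → S → ℝ) (π : S → A → ℝ) : ℕ → S → S → ℝ
  | 0, s, s' => if s' = s then 1 else 0
  | (t + 1), s, s' => ∑ s'', visit P π t s s'' * stepKernel P π s'' s'

/-- Expected one-step reward of policy `π` at state `s`. -/
def rewardOf (r : S → A → ℝ) (π : S → A → ℝ) (s : S) : ℝ := ∑ a, π s a * r s a

/-- State value function `V_π`. -/
noncomputable def Vval [DecidableEq S] (P : S → A → S → ℝ) (r : S → A → ℝ) (γ : ℝ) (π : S → A → ℝ)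
    (s : S) : ℝ :=
  ∑' t : ℕ, γ ^ t * ∑ s', visit P π t s s' * rewardOf r π s'

/-- Action value function `Q_π`. -/
noncomputable def Qval [DecidableEq S] (P : S → A → S → ℝ) (r : S → A → ℝ) (γ : ℝ) (π : S → A → ℝ)
    (s : S) (a : A) : ℝ :=
  r s a + γ * ∑ s', P s a s' * Vval P r γ π s'

/-- Advantage function `A_π = Q_π - V_π`. -/
noncomputable def Adv [DecidableEq S] (P : S → A → S → ℝ) (r : S → A → ℝ) (γ : ℝ) (π : S → A → ℝ)
    (s : S) (a : A) : ℝ :=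
  Qval P r γ π s a - Vval P r γ π s

/-- Expected discounted return `J(π)` from initial distribution `ρ₀`. -/
noncomputable def Jval [DecidableEq S] (P : S → A → S → ℝ) (r : S → A → ℝ) (γ : ℝ) (ρ₀ : S → ℝ)
    (π : S → A → ℝ) : ℝ :=
  ∑ s, ρ₀ s * Vval P r γ π s

/-- Normalized discounted state-visitation distribution `d_π`. -/
noncomputable def dvisit [DecidableEq S] (P : S → A → S → ℝ) (γ : ℝ) (ρ₀ : S → ℝ) (π : S → A → ℝ)
    (s : S) : ℝ :=
  (1 - γ) * ∑' t : ℕ, γ ^ t * ∑ s₀, ρ₀ s₀ * visit P π t s₀ s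

end MDP

/-!
Let `d_t` be the law of the state at time `t` under `π'`. Since `π'` sums to one, the
`π'`-average of `A_π` at `s` is `r_{π'}(s) + γ 𝔼[V_π(s₁) | s₀ = s] - V_π(s)`, so against `d_t`
it becomes `𝔼_{d_t}[r_{π'}] + γ 𝔼_{d_{t+1}}[V_π] - 𝔼_{d_t}[V_π]`. Discounting and summing over
`t`, the first terms add up to `J(π')` and the others telescope to `-𝔼_{d_0}[V_π] = -J(π)`;
the factor `1 - γ` in `d_{π'}` is what the prefactor `1 / (1 - γ)` cancels.
-/

lemma sum_mul_sum_mul_comm {X Y : Type*} [Fintype X] [Fintype Y] (p : X → ℝ) (K : X → Y → ℝ)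
    (g : Y → ℝ) : ∑ x, p x * ∑ y, K x y * g y = ∑ y, (∑ x, p x * K x y) * g y :=
  Matrix.dotProduct_mulVec p (Matrix.of K) g

lemma hasSum_pow_mul_telescope {γ : ℝ} {W : ℕ → ℝ} (hW : Summable fun t => γ ^ t * W t) :
    HasSum (fun t => γ ^ t * (γ * W (t + 1) - W t)) (-W 0) := by
  obtain ⟨σ, hσ⟩ := hW
  have hshift : HasSum (fun t => γ ^ (t + 1) * W (t + 1)) (σ - W 0) := by
    simpa using (hasSum_nat_add_iff' 1).2 hσ
  simpa [mul_sub, pow_succ, mul_assoc] using hshift.sub hσ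

section Dynamics

variable {S A : Type*} [Fintype S] [Fintype A] {P : S → A → S → ℝ} {π : S → A → ℝ}

lemma stepKernel_nonneg (hP : IsKernel P) (hπ : IsPolicy π) (s s' : S) :
    0 ≤ stepKernel P π s s' :=
  Finset.sum_nonneg fun a _ => mul_nonneg (hπ.1 s a) (hP.1 s a s')

lemma sum_stepKernel (hP : IsKernel P) (hπ : IsPolicy π) (s : S) :
    ∑ s', stepKernel P π s s' = 1 := by
  simp only [stepKernel]
  rw [Finset.sum_comm]
  simp only [← Finset.mul_sum, hP.2, mul_one, hπ.2]

variable [DecidableEq S]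

lemma visit_nonneg (hP : IsKernel P) (hπ : IsPolicy π) (t : ℕ) (s s' : S) :
    0 ≤ visit P π t s s' := by
  induction t generalizing s' with
  | zero => unfold visit; split_ifs <;> norm_num
  | succ t ih =>
    exact Finset.sum_nonneg fun s'' _ => mul_nonneg (ih s'') (stepKernel_nonneg hP hπ s'' s')

lemma sum_visit (hP : IsKernel P) (hπ : IsPolicy π) (t : ℕ) (s : S) :
    ∑ s', visit P π t s s' = 1 := by
  induction t with
  | zero => simp [visit]
  | succ t ih =>
    simp only [visit]
    rw [Finset.sum_comm]
    simp only [← Finset.mul_sum, sum_stepKernel hP hπ, mul_one, ih]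

lemma visit_le_one (hP : IsKernel P) (hπ : IsPolicy π) (t : ℕ) (s s' : S) :
    visit P π t s s' ≤ 1 :=
  sum_visit hP hπ t s ▸
    Finset.single_le_sum (fun x _ => visit_nonneg hP hπ t s x) (Finset.mem_univ s')

lemma summable_pow_mul_visit (hP : IsKernel P) (hπ : IsPolicy π) {γ : ℝ} (hγ0 : 0 ≤ γ)
    (hγ1 : γ < 1) (s s' : S) : Summable fun t => γ ^ t * visit P π t s s' :=
  (summable_geometric_of_lt_one hγ0 hγ1).of_norm_bounded fun t => by
    rw [Real.norm_eq_abs,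
      abs_of_nonneg (mul_nonneg (pow_nonneg hγ0 t) (visit_nonneg hP hπ t s s'))]
    exact mul_le_of_le_one_right (pow_nonneg hγ0 t) (visit_le_one hP hπ t s s')

lemma summable_pow_mul_sum_visit_mul (hP : IsKernel P) (hπ : IsPolicy π) {γ : ℝ} (hγ0 : 0 ≤ γ)
    (hγ1 : γ < 1) (s : S) (g : S → ℝ) :
    Summable fun t => γ ^ t * ∑ s', visit P π t s s' * g s' := by
  simp_rw [Finset.mul_sum, ← mul_assoc]
  exact summable_sum fun s' _ => (summable_pow_mul_visit hP hπ hγ0 hγ1 s s').mul_right (g s')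

noncomputable def stateDist (P : S → A → S → ℝ) (π : S → A → ℝ) (ρ₀ : S → ℝ) (t : ℕ) (s : S) :
    ℝ :=
  ∑ s₀, ρ₀ s₀ * visit P π t s₀ s

lemma stateDist_zero (ρ₀ : S → ℝ) : stateDist P π ρ₀ 0 = ρ₀ := by
  ext s
  simp [stateDist, visit]

lemma sum_stateDist_mul_sum_stepKernel_mul (ρ₀ g : S → ℝ) (t : ℕ) :
    ∑ s, stateDist P π ρ₀ t s * ∑ s', stepKernel P π s s' * g s' =
      ∑ s', stateDist P π ρ₀ (t + 1) s' * g s' := by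
  rw [sum_mul_sum_mul_comm]
  congr! 2 with s'
  exact (sum_mul_sum_mul_comm ρ₀ (visit P π t) fun s'' => stepKernel P π s'' s').symm

lemma summable_pow_mul_stateDist (hP : IsKernel P) (hπ : IsPolicy π) {γ : ℝ} (hγ0 : 0 ≤ γ)
    (hγ1 : γ < 1) (ρ₀ : S → ℝ) (s : S) : Summable fun t => γ ^ t * stateDist P π ρ₀ t s := by
  simp_rw [stateDist, Finset.mul_sum, mul_left_comm (γ ^ _)]
  exact summable_sum fun s₀ _ => (summable_pow_mul_visit hP hπ hγ0 hγ1 s₀ s).mul_left (ρ₀ s₀)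

lemma summable_pow_mul_sum_stateDist_mul (hP : IsKernel P) (hπ : IsPolicy π) {γ : ℝ}
    (hγ0 : 0 ≤ γ) (hγ1 : γ < 1) (ρ₀ g : S → ℝ) :
    Summable fun t => γ ^ t * ∑ s, stateDist P π ρ₀ t s * g s := by
  simp_rw [Finset.mul_sum, ← mul_assoc]
  exact summable_sum fun s _ => (summable_pow_mul_stateDist hP hπ hγ0 hγ1 ρ₀ s).mul_right (g s)

lemma dvisit_eq_tsum (γ : ℝ) (ρ₀ : S → ℝ) (s : S) :
    dvisit P γ ρ₀ π s = (1 - γ) * ∑' t, γ ^ t * stateDist P π ρ₀ t s :=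
  rfl

lemma sum_dvisit_mul (hP : IsKernel P) (hπ : IsPolicy π) {γ : ℝ} (hγ0 : 0 ≤ γ) (hγ1 : γ < 1)
    (ρ₀ g : S → ℝ) :
    ∑ s, dvisit P γ ρ₀ π s * g s =
      (1 - γ) * ∑' t, γ ^ t * ∑ s, stateDist P π ρ₀ t s * g s := by
  calc ∑ s, dvisit P γ ρ₀ π s * g s
      = (1 - γ) * ∑ s, ∑' t, γ ^ t * stateDist P π ρ₀ t s * g s := by
        simp_rw [dvisit_eq_tsum, mul_assoc, ← tsum_mul_right, ← mul_assoc, ← Finset.mul_sum]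
    _ = (1 - γ) * ∑' t, γ ^ t * ∑ s, stateDist P π ρ₀ t s * g s := by
        rw [← Summable.tsum_finsetSum fun s _ =>
          (summable_pow_mul_stateDist hP hπ hγ0 hγ1 ρ₀ s).mul_right (g s)]
        simp_rw [Finset.mul_sum, mul_assoc]

lemma Jval_eq_tsum (hP : IsKernel P) (hπ : IsPolicy π) (r : S → A → ℝ) {γ : ℝ} (hγ0 : 0 ≤ γ)
    (hγ1 : γ < 1) (ρ₀ : S → ℝ) :
    Jval P r γ ρ₀ π = ∑' t, γ ^ t * ∑ s, stateDist P π ρ₀ t s * rewardOf r π s := by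
  simp_rw [Jval, Vval, ← tsum_mul_left]
  rw [← Summable.tsum_finsetSum fun s₀ _ =>
    (summable_pow_mul_sum_visit_mul hP hπ hγ0 hγ1 s₀ (rewardOf r π)).mul_left (ρ₀ s₀)]
  congr! 1 with t
  simp_rw [mul_left_comm (ρ₀ _), ← Finset.mul_sum, stateDist, sum_mul_sum_mul_comm]

lemma sum_policy_mul_Adv (hπ : IsPolicy π) (r : S → A → ℝ) (γ : ℝ) (μ : S → A → ℝ) (s : S) :
    ∑ a, π s a * Adv P r γ μ s a =
      rewardOf r π s + γ * ∑ s', stepKernel P π s s' * Vval P r γ μ s' - Vval P r γ μ s := by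
  simp_rw [Adv, Qval, mul_sub, mul_add, Finset.sum_sub_distrib, Finset.sum_add_distrib,
    ← Finset.sum_mul, hπ.2, one_mul, mul_left_comm _ γ, ← Finset.mul_sum, sum_mul_sum_mul_comm]
  rfl

end Dynamics

theorem performance_difference_lemma_general {S A : Type*} [Fintype S] [DecidableEq S] [Fintype A]
    (P : S → A → S → ℝ) (r : S → A → ℝ) (γ : ℝ) (ρ₀ : S → ℝ) (π π' : S → A → ℝ)
    (hP : IsKernel P) (hπ' : IsPolicy π')
    (hγ0 : 0 ≤ γ) (hγ1 : γ < 1) :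
    Jval P r γ ρ₀ π' - Jval P r γ ρ₀ π =
      (1 / (1 - γ)) *
        ∑ s, dvisit P γ ρ₀ π' s * ∑ a, π' s a * Adv P r γ π s a := by
  set W : ℕ → ℝ := fun t => ∑ s, stateDist P π' ρ₀ t s * Vval P r γ π s
  have hstep : ∀ t, ∑ s, stateDist P π' ρ₀ t s * ∑ a, π' s a * Adv P r γ π s a =
      ∑ s, stateDist P π' ρ₀ t s * rewardOf r π' s + (γ * W (t + 1) - W t) := by
    intro t
    simp_rw [sum_policy_mul_Adv hπ' r γ π, mul_sub, mul_add, Finset.sum_sub_distrib,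
      Finset.sum_add_distrib, mul_left_comm (stateDist P π' ρ₀ t _) γ, ← Finset.mul_sum,
      sum_stateDist_mul_sum_stepKernel_mul]
    ring
  have hreturn := (summable_pow_mul_sum_stateDist_mul hP hπ' hγ0 hγ1 ρ₀ (rewardOf r π')).hasSum
  have htelescope := hasSum_pow_mul_telescope
    (summable_pow_mul_sum_stateDist_mul hP hπ' hγ0 hγ1 ρ₀ (Vval P r γ π))
  have hW0 : ∑ s, stateDist P π' ρ₀ 0 s * Vval P r γ π s = Jval P r γ ρ₀ π := by
    rw [stateDist_zero]; rfl
  rw [sum_dvisit_mul hP hπ' hγ0 hγ1, ← mul_assoc, one_div_mul_cancel (sub_ne_zero.2 hγ1.ne'),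
    one_mul]
  simp_rw [hstep, mul_add]
  rw [(hreturn.add htelescope).tsum_eq, ← Jval_eq_tsum hP hπ' r hγ0 hγ1, hW0, sub_eq_add_neg]

/-- **Performance difference lemma (Kakade–Langford).** -/
theorem performance_difference_lemma {S A : Type*} [Fintype S] [DecidableEq S] [Fintype A]
    (P : S → A → S → ℝ) (r : S → A → ℝ) (γ : ℝ) (ρ₀ : S → ℝ) (π π' : S → A → ℝ)
    (hP : IsKernel P) (hπ : IsPolicy π) (hπ' : IsPolicy π') (hρ : IsDist ρ₀)
    (hγ0 : 0 ≤ γ) (hγ1 : γ < 1) :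
    Jval P r γ ρ₀ π' - Jval P r γ ρ₀ π =
      (1 / (1 - γ)) *
        ∑ s, dvisit P γ ρ₀ π' s * ∑ a, π' s a * Adv P r γ π s a :=
  performance_difference_lemma_general P r γ ρ₀ π π' hP hπ' hγ0 hγ1
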